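/- arXiv:2601.03563 — 5 statements merged into one kernel-verified Lean document; each statement's English description precedes it below -/
import Mathlib

section
/- For the 2x2 matrix J = [[β_d k_d − γ, β_e k_e],[σ s g'(0), −δ]] with positive parameters β_d, β_e, σ, γ, δ, positive reals k_d, k_e, s, and g'(0) > 0, if R₀ := (β_d k_d)/γ + (β_e σ g'(0) k_e s)/(γ δ) < 1, then both eigenvalues of J have negative real part (equivalently, trace(J) < 0 and det(J) > 0). -/
open Matrix

/-!
`R₀ < 1` is `det J > 0` divided by `γ δ`, and since the second summand of `R₀` is positive it also
gives `β_d k_d < γ`, hence `tr J < 0`. The eigenvalues are the roots of `X² - (tr J) X + det J`, and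
such a root is either real (then positivity of every term excludes `Re μ ≥ 0`) or has real part
`tr J / 2`.
-/

theorem Complex.re_neg_of_sq_sub_mul_add_eq_zero {t d : ℝ} (ht : t < 0) (hd : 0 < d) {μ : ℂ}
    (hμ : μ ^ 2 - t * μ + d = 0) : μ.re < 0 := by
  have hre : μ.re ^ 2 - μ.im ^ 2 - t * μ.re + d = 0 := by
    simpa [sq] using congrArg Complex.re hμ
  have him : μ.im * (2 * μ.re - t) = 0 := by
    have := congrArg Complex.im hμ
    simp only [sq, Complex.add_im, Complex.sub_im, Complex.mul_im, Complex.ofReal_re,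
      Complex.ofReal_im, Complex.zero_im] at this
    linarith
  rcases mul_eq_zero.mp him with hreal | hre_half
  · by_contra! h
    nlinarith
  · linarith

theorem Matrix.re_neg_of_isRoot_charpoly_map_fin_two (A : Matrix (Fin 2) (Fin 2) ℝ)
    (htr : A.trace < 0) (hdet : 0 < A.det) {μ : ℂ}
    (hμ : (A.map (algebraMap ℝ ℂ)).charpoly.IsRoot μ) : μ.re < 0 := by
  rw [charpoly_map, charpoly_fin_two, Polynomial.IsRoot.def, Polynomial.eval_map_algebraMap] at hμ
  refine Complex.re_neg_of_sq_sub_mul_add_eq_zero htr hdet ?_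
  simpa [Polynomial.aeval_def, Polynomial.eval₂_X_pow] using hμ

theorem stmt0_general (βd βe σ γ δ kd ke s g0 : ℝ)
    (hβe : 0 < βe) (hσ : 0 < σ) (hγ : 0 < γ) (hδ : 0 < δ)
    (hke : 0 < ke) (hs : 0 < s) (hg0 : 0 < g0)
    (hR0 : βd * kd / γ + βe * σ * g0 * ke * s / (γ * δ) < 1) :
    (∀ μ : ℂ, ((!![βd * kd - γ, βe * ke; σ * s * g0, -δ] : Matrix (Fin 2) (Fin 2) ℝ).map
        (algebraMap ℝ ℂ)).charpoly.IsRoot μ → μ.re < 0) ∧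
    Matrix.trace (!![βd * kd - γ, βe * ke; σ * s * g0, -δ] : Matrix (Fin 2) (Fin 2) ℝ) < 0 ∧
    0 < Matrix.det (!![βd * kd - γ, βe * ke; σ * s * g0, -δ] : Matrix (Fin 2) (Fin 2) ℝ) := by
  set J : Matrix (Fin 2) (Fin 2) ℝ := !![βd * kd - γ, βe * ke; σ * s * g0, -δ] with hJ
  have hcross : 0 < βe * σ * g0 * ke * s := by positivity
  have hR0_cleared : βd * kd * δ + βe * σ * g0 * ke * s < γ * δ := by
    rw [div_add_div _ _ hγ.ne' (by positivity), div_lt_one (by positivity)] at hR0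
    nlinarith
  have htr : J.trace < 0 := by
    rw [hJ, trace_fin_two_of]
    nlinarith
  have hdet : 0 < J.det := by
    rw [hJ, det_fin_two_of]
    linarith
  exact ⟨fun μ => J.re_neg_of_isRoot_charpoly_map_fin_two htr hdet, htr, hdet⟩

theorem stmt0 (βd βe σ γ δ kd ke s g0 : ℝ)
    (hβd : 0 < βd) (hβe : 0 < βe) (hσ : 0 < σ) (hγ : 0 < γ) (hδ : 0 < δ)
    (hkd : 0 < kd) (hke : 0 < ke) (hs : 0 < s) (hg0 : 0 < g0)
    (hR0 : βd * kd / γ + βe * σ * g0 * ke * s / (γ * δ) < 1) :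
    (∀ μ : ℂ, ((!![βd * kd - γ, βe * ke; σ * s * g0, -δ] : Matrix (Fin 2) (Fin 2) ℝ).map
        (algebraMap ℝ ℂ)).charpoly.IsRoot μ → μ.re < 0) ∧
    Matrix.trace (!![βd * kd - γ, βe * ke; σ * s * g0, -δ] : Matrix (Fin 2) (Fin 2) ℝ) < 0 ∧
    0 < Matrix.det (!![βd * kd - γ, βe * ke; σ * s * g0, -δ] : Matrix (Fin 2) (Fin 2) ℝ) :=
  stmt0_general βd βe σ γ δ kd ke s g0 hβe hσ hγ hδ hke hs hg0 hR0
end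

section
/- Let g be twice continuously differentiable with g(0)=0, g'>0 and g''<0 on [0,∞), let all parameters β_d, β_e, k_d, k_e, σ, δ, s, γ be positive, and define F(x) = (β_d k_d x + β_e k_e σ g(sx)/(δ + σ g(sx)))(1−x) − γ x. If R₀ := (β_d k_d)/γ + (β_e σ g'(0) k_e s)/(γδ) > 1, then F has exactly one zero x* in the open interval (0,1). -/
/-!
Write the left-hand side as `F x = (a x + b y x) (1 - x) - γ x` with `y` the saturated incidence
`σ g(s x) / (δ + σ g(s x))`. Then `F 0 = 0`, `F 1 = -γ < 0` and `F' 0 = γ (R₀ - 1) > 0`, so `F`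
changes sign on `(0, 1)`. For uniqueness, `y x / x` is the product of the nonincreasing factors
`σ g(s x) / x` (concavity of `g` and `g 0 = 0`) and `1 / (δ + σ g(s x))` (monotonicity of `g`);
hence `F x / x = (a + b y x / x) (1 - x) - γ` is strictly decreasing on `(0, 1)`.
-/

open Set Filter Topology

theorem ConcaveOn.antitoneOn_div {𝕜 : Type*} [Field 𝕜] [LinearOrder 𝕜] [IsStrictOrderedRing 𝕜]
    {f : 𝕜 → 𝕜} (hf : ConcaveOn 𝕜 (Ici 0) f) (h0 : f 0 = 0) :
    AntitoneOn (fun x => f x / x) (Ioi 0) := by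
  intro x hx y hy hxy
  have := hf.neg.secant_mono self_mem_Ici (le_of_lt hx) (le_of_lt hy) (ne_of_gt hx) (ne_of_gt hy) hxy
  simp only [Pi.neg_apply, h0, neg_zero, sub_zero, neg_div] at this
  exact neg_le_neg_iff.mp this

theorem antitoneOn_saturation_div {g : ℝ → ℝ} (hg : ∀ x > 0, 0 ≤ g x)
    (hmono : MonotoneOn g (Ioi 0)) (hslope : AntitoneOn (fun x => g x / x) (Ioi 0))
    {σ δ s : ℝ} (hσ : 0 < σ) (hδ : 0 < δ) (hs : 0 < s) :
    AntitoneOn (fun x => σ * g (s * x) / (δ + σ * g (s * x)) / x) (Ioi 0) := by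
  have hfactor : ∀ x > 0, σ * g (s * x) / (δ + σ * g (s * x)) / x
      = σ * s * (g (s * x) / (s * x)) * (δ + σ * g (s * x))⁻¹ := by
    intro x hx
    field_simp
  intro x hx y hy hxy
  have hsx : 0 < s * x := mul_pos hs hx
  have hsy : 0 < s * y := mul_pos hs hy
  have hsxy : s * x ≤ s * y := mul_le_mul_of_nonneg_left hxy hs.le
  simp only [hfactor x hx, hfactor y hy]
  have hgx := hg _ hsx
  have hgy := hg _ hsy
  refine mul_le_mul (mul_le_mul_of_nonneg_left (hslope hsx hsy hsxy) (by positivity)) ?_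
    (by positivity) ?_
  · gcongr
    exact hmono hsx hsy hsxy
  · exact mul_nonneg (by positivity) (div_nonneg hgx hsx.le)

theorem AntitoneOn.strictAntiOn_mul_one_sub {a : ℝ → ℝ} {s : Set ℝ} (ha : AntitoneOn a s)
    (hpos : ∀ x ∈ s, 0 < a x) (hs : s ⊆ Iic 1) : StrictAntiOn (fun x => a x * (1 - x)) s := by
  intro x hx y hy hxy
  calc a y * (1 - y) < a y * (1 - x) := by gcongr; exact hpos y hy
    _ ≤ a x * (1 - x) := mul_le_mul_of_nonneg_right (ha hx hy hxy.le) (sub_nonneg.mpr (hs hx))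

theorem existsUnique_mem_Ioo_zero_of_strictAntiOn_div {f : ℝ → ℝ} {f' : ℝ}
    (hc : ContinuousOn f (Ioc 0 1)) (h0 : f 0 = 0) (h1 : f 1 < 0)
    (hd : HasDerivWithinAt f f' (Ioi 0) 0) (hf' : 0 < f')
    (hanti : StrictAntiOn (fun x => f x / x) (Ioo 0 1)) :
    ∃! x, x ∈ Ioo (0 : ℝ) 1 ∧ f x = 0 := by
  have hslope : Tendsto (fun x => f x / x) (𝓝[>] 0) (𝓝 f') := by
    have := (hasDerivWithinAt_iff_tendsto_slope' (lt_irrefl 0)).mp hd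
    have hslope_eq : slope f 0 = fun x => f x / x := by
      ext x
      simp [slope_def_field, h0]
    rwa [hslope_eq] at this
  obtain ⟨x₀, hpos, hx₀⟩ := ((hslope.eventually (lt_mem_nhds hf')).and
    (Ioo_mem_nhdsGT one_pos)).exists
  have hfx₀ : 0 < f x₀ := (div_pos_iff_of_pos_right hx₀.1).mp hpos
  obtain ⟨x, hx, hfx⟩ := intermediate_value_Ioo' hx₀.2.le
    (hc.mono (Icc_subset_Ioc hx₀.1 le_rfl)) ⟨h1, hfx₀⟩
  refine ⟨x, ⟨⟨hx₀.1.trans hx.1, hx.2⟩, hfx⟩, fun y ⟨hy, hfy⟩ => ?_⟩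
  exact hanti.injOn hy ⟨hx₀.1.trans hx.1, hx.2⟩ (by simp [hfx, hfy])

theorem HasDerivAt.div_const_add_self_of_eq_zero {u : ℝ → ℝ} {u' δ x : ℝ}
    (hu : HasDerivAt u u' x) (hu0 : u x = 0) (hδ : δ ≠ 0) :
    HasDerivAt (fun x => u x / (δ + u x)) (u' / δ) x := by
  refine (hu.fun_div (hu.const_add δ) (by simpa [hu0] using hδ)).congr_deriv ?_
  simp only [hu0, zero_mul, add_zero, sub_zero]
  field_simp

theorem existsUnique_endemic_equilibrium {y : ℝ → ℝ} {y' a b γ : ℝ} (ha : 0 < a) (hb : 0 ≤ b)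
    (hγ : 0 < γ) (hc : ContinuousOn y (Ioc 0 1)) (hy0 : y 0 = 0)
    (hd : HasDerivWithinAt y y' (Ioi 0) 0) (hnn : ∀ x ∈ Ioo (0 : ℝ) 1, 0 ≤ y x)
    (hanti : AntitoneOn (fun x => y x / x) (Ioo 0 1)) (hR0 : γ < a + b * y') :
    ∃! x, x ∈ Ioo (0 : ℝ) 1 ∧ (a * x + b * y x) * (1 - x) - γ * x = 0 := by
  have hpos : ∀ x ∈ Ioo (0 : ℝ) 1, 0 < a + b * (y x / x) := fun x hx => by
    have := div_nonneg (hnn x hx) hx.1.le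
    positivity
  have hmono : AntitoneOn (fun x => a + b * (y x / x)) (Ioo 0 1) := fun x hx x' hx' hxx' => by
    have := hanti hx hx' hxx'
    dsimp only at this ⊢
    gcongr
  have hstrict := hmono.strictAntiOn_mul_one_sub hpos fun x hx => hx.2.le
  have hdiv : ∀ x ∈ Ioo (0 : ℝ) 1, ((a * x + b * y x) * (1 - x) - γ * x) / x
      = (a + b * (y x / x)) * (1 - x) - γ := fun x hx => by
    field_simp [hx.1.ne']
  have hid := hasDerivWithinAt_id (0 : ℝ) (Ioi 0)
  refine existsUnique_mem_Ioo_zero_of_strictAntiOn_div (f' := a + b * y' - γ)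
    (by fun_prop) (by simp [hy0]) (by simpa using hγ)
    ((((hid.const_mul a).add (hd.const_mul b)).mul (hid.const_sub 1)).sub
      (hid.const_mul γ) |>.congr_deriv (by simp [hy0])) (by linarith) ?_
  intro x hx x' hx' hxx'
  dsimp only
  rw [hdiv x hx, hdiv x' hx']
  linarith [hstrict hx hx' hxx']

theorem stmt4 (g : ℝ → ℝ) (hg : ContDiff ℝ 2 g)
    (hg0 : g 0 = 0) (hgp : ∀ x ≥ (0:ℝ), 0 < deriv g x)
    (hgpp : ∀ x ≥ (0:ℝ), deriv (deriv g) x < 0)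
    (βd βe kd ke σ δ s γ : ℝ)
    (hβd : 0 < βd) (hβe : 0 < βe) (hkd : 0 < kd) (hke : 0 < ke)
    (hσ : 0 < σ) (hδ : 0 < δ) (hs : 0 < s) (hγ : 0 < γ)
    (hR0 : 1 < βd * kd / γ + βe * σ * (deriv g 0) * ke * s / (γ * δ)) :
    ∃! x : ℝ, x ∈ Set.Ioo (0:ℝ) 1 ∧
      (βd * kd * x + βe * ke * (σ * g (s * x) / (δ + σ * g (s * x)))) * (1 - x) - γ * x = 0 := by
  have hgd : Differentiable ℝ g := hg.differentiable (by norm_num)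
  have hgmono : MonotoneOn g (Ici 0) :=
    (strictMonoOn_of_deriv_pos (convex_Ici 0) hgd.continuous.continuousOn
      fun x hx => hgp x (interior_subset hx)).monotoneOn
  have hgnn : ∀ x > 0, 0 ≤ g x := fun x hx => hg0 ▸ hgmono self_mem_Ici hx.le hx.le
  have hgconc : ConcaveOn ℝ (Ici 0) g :=
    concaveOn_of_deriv2_nonpos (convex_Ici 0) hgd.continuous.continuousOn hgd.differentiableOn
      hg.differentiable_deriv_two.differentiableOn fun x hx => (hgpp x (interior_subset hx)).le
  have hu : HasDerivAt (fun x => σ * g (s * x)) (σ * (deriv g 0 * s)) 0 := by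
    simpa using ((hgd (s * 0)).hasDerivAt.comp 0 ((hasDerivAt_id 0).const_mul s)).const_mul σ
  have hR0_eq : βd * kd / γ + βe * σ * deriv g 0 * ke * s / (γ * δ)
      = (βd * kd + βe * ke * (σ * (deriv g 0 * s) / δ)) / γ := by
    field_simp
  rw [hR0_eq, one_lt_div hγ] at hR0
  have hden : ∀ x > 0, 0 < δ + σ * g (s * x) := fun x hx => by
    have := hgnn (s * x) (by positivity)
    positivity
  refine existsUnique_endemic_equilibrium (by positivity) (by positivity) hγ ?_ (by simp [hg0])
    (hu.div_const_add_self_of_eq_zero (by simp [hg0]) hδ.ne').hasDerivWithinAt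
    (fun x hx => ?_) ((antitoneOn_saturation_div hgnn (hgmono.mono Ioi_subset_Ici_self)
      (hgconc.antitoneOn_div hg0) hσ hδ hs).mono Ioo_subset_Ioi_self) hR0
  · intro x hx
    have hgc := hgd.continuous
    have := (hden x hx.1).ne'
    exact ContinuousAt.continuousWithinAt (by fun_prop (disch := assumption))
  · have := hgnn (s * x) (mul_pos hs hx.1)
    have := hden x hx.1
    positivity
end

section
/- Under the hypotheses of the previous statement (g smooth, g(0)=0, g'>0, g''<0 on [0,∞), positive parameters, R₀ > 1), with F(x) = G(x)(1−x) − γx where G(x) = β_d k_d x + β_e k_e σ g(sx)/(δ + σ g(sx)): F'(0) = γ(R₀ − 1) > 0 and F'(1) = −G(1) − γ < 0, and F' has a unique zero c ∈ (0,1). -/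
/-!
Write `F' = G' (1 - x) - G - γ`. Here `G' = βd kd + βe ke σ δ s · g'(s x) / (δ + σ g(s x))²` is
positive and decreasing on `[0, ∞)`, being a product of the decreasing `g'(s x)` and the
decreasing `1 / (δ + σ g(s x))²`; and `G` is increasing. Hence `F'` is strictly decreasing on
`[0, 1]`, which replaces the sign of `F''`. Since `F'(0) > 0 > F'(1)`, Darboux's theorem gives
a zero of `F'` in `(0, 1)`, so no continuity of `g'` is needed, and strict monotonicity makes
it unique.
-/

open Set

theorem HasDerivAt.mul_one_sub_sub {G : ℝ → ℝ} {G' x : ℝ} (γ : ℝ) (hG : HasDerivAt G G' x) :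
    HasDerivAt (fun y => G y * (1 - y) - γ * y) (G' * (1 - x) - G x - γ) x := by
  refine ((hG.mul ((hasDerivAt_id x).const_sub 1)).sub
    ((hasDerivAt_id x).const_mul γ)).congr_deriv ?_
  simp only [id]
  ring

theorem strictAntiOn_mul_one_sub_sub {G G' : ℝ → ℝ} (γ : ℝ)
    (hG : ∀ x ∈ Icc (0 : ℝ) 1, HasDerivAt G (G' x) x) (hpos : ∀ x ∈ Icc (0 : ℝ) 1, 0 < G' x)
    (hanti : AntitoneOn G' (Icc 0 1)) :
    StrictAntiOn (fun x => G' x * (1 - x) - G x - γ) (Icc 0 1) := by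
  have hmono : MonotoneOn G (Icc 0 1) :=
    monotoneOn_of_hasDerivWithinAt_nonneg (convex_Icc 0 1) (HasDerivAt.continuousOn hG)
      (fun x hx => (hG x (interior_subset hx)).hasDerivWithinAt)
      (fun x hx => (hpos x (interior_subset hx)).le)
  intro x hx y hy hxy
  have hGxy := hmono hx hy hxy.le
  have h1y : 0 ≤ 1 - y := sub_nonneg.2 hy.2
  have hpos_x := hpos x hx
  calc G' y * (1 - y) - G y - γ ≤ G' x * (1 - y) - G x - γ := by
        gcongr
        exact hanti hx hy hxy.le
    _ < G' x * (1 - x) - G x - γ := by gcongr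

theorem existsUnique_deriv_eq_zero_of_strictAntiOn {f f' : ℝ → ℝ} {a b : ℝ} (hab : a ≤ b)
    (hf : ∀ x ∈ Icc a b, HasDerivAt f (f' x) x) (hanti : StrictAntiOn f' (Icc a b))
    (ha : 0 < f' a) (hb : f' b < 0) :
    ∃! c, c ∈ Ioo a b ∧ deriv f c = 0 := by
  have hderiv : ∀ x ∈ Icc a b, deriv f x = f' x := fun x hx => (hf x hx).deriv
  obtain ⟨c, hc, hc0⟩ := exists_hasDerivWithinAt_eq_of_lt_of_gt hab
    (fun x hx => (hf x hx).hasDerivWithinAt) ha hb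
  refine ⟨c, ⟨hc, hderiv c (Ioo_subset_Icc_self hc) ▸ hc0⟩, fun y ⟨hy, hy0⟩ => ?_⟩
  refine hanti.injOn (Ioo_subset_Icc_self hy) (Ioo_subset_Icc_self hc) ?_
  rw [← hderiv y (Ioo_subset_Icc_self hy), hy0, hc0]

theorem existsUnique_deriv_mul_one_sub_sub_eq_zero {G G' : ℝ → ℝ} {γ : ℝ}
    (hG : ∀ x ∈ Icc (0 : ℝ) 1, HasDerivAt G (G' x) x) (hpos : ∀ x ∈ Icc (0 : ℝ) 1, 0 < G' x)
    (hanti : AntitoneOn G' (Icc 0 1)) (h0 : 0 < deriv (fun x => G x * (1 - x) - γ * x) 0)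
    (h1 : deriv (fun x => G x * (1 - x) - γ * x) 1 < 0) :
    ∃! c, c ∈ Ioo 0 1 ∧ deriv (fun x => G x * (1 - x) - γ * x) c = 0 := by
  have hF (x) (hx : x ∈ Icc (0 : ℝ) 1) := (hG x hx).mul_one_sub_sub γ
  exact existsUnique_deriv_eq_zero_of_strictAntiOn zero_le_one hF
    (strictAntiOn_mul_one_sub_sub γ hG hpos hanti)
    ((hF 0 (left_mem_Icc.2 zero_le_one)).deriv ▸ h0)
    ((hF 1 (right_mem_Icc.2 zero_le_one)).deriv ▸ h1)

theorem HasDerivAt.saturation {u : ℝ → ℝ} {u' x : ℝ} (σ δ : ℝ) (hu : HasDerivAt u u' x)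
    (hD : δ + σ * u x ≠ 0) :
    HasDerivAt (fun y => σ * u y / (δ + σ * u y)) (σ * δ * u' / (δ + σ * u x) ^ 2) x := by
  refine ((hu.const_mul σ).div ((hu.const_mul σ).const_add δ) hD).congr_deriv ?_
  ring

theorem antitoneOn_div_sq_saturation {u u' : ℝ → ℝ} {S : Set ℝ} {σ δ : ℝ} (hσ : 0 ≤ σ)
    (hδ : 0 < δ) (hu₀ : ∀ x ∈ S, 0 ≤ u x) (hu : MonotoneOn u S) (hu'₀ : ∀ x ∈ S, 0 ≤ u' x)
    (hu' : AntitoneOn u' S) :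
    AntitoneOn (fun x => u' x / (δ + σ * u x) ^ 2) S := by
  intro x hx y hy hxy
  have hDx : 0 < δ + σ * u x := by have := hu₀ x hx; positivity
  calc u' y / (δ + σ * u y) ^ 2 ≤ u' x / (δ + σ * u y) ^ 2 := by
        gcongr
        exact hu' hx hy hxy
    _ ≤ u' x / (δ + σ * u x) ^ 2 := by
        gcongr
        · exact hu'₀ x hx
        · exact hu hx hy hxy

theorem hasDerivAt_incidence {g : ℝ → ℝ} {σ δ s x : ℝ} (a b : ℝ)
    (hg : DifferentiableAt ℝ g (s * x)) (hD : δ + σ * g (s * x) ≠ 0) :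
    HasDerivAt (fun y => a * y + b * (σ * g (s * y) / (δ + σ * g (s * y))))
      (a + b * (σ * δ * s) * (deriv g (s * x) / (δ + σ * g (s * x)) ^ 2)) x := by
  have hu : HasDerivAt (fun y => g (s * y)) (deriv g (s * x) * s) x :=
    hg.hasDerivAt.comp x (hasDerivAt_const_mul s)
  refine (((hasDerivAt_id x).const_mul a).add ((hu.saturation σ δ hD).const_mul b)).congr_deriv ?_
  ring

theorem antitoneOn_incidence_deriv {g : ℝ → ℝ} {σ δ s : ℝ} (a b : ℝ) (hb : 0 ≤ b) (hσ : 0 ≤ σ)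
    (hδ : 0 < δ) (hs : 0 ≤ s) (hg₀ : ∀ x ≥ 0, 0 ≤ g x) (hg : MonotoneOn g (Ici 0))
    (hg'₀ : ∀ x ≥ 0, 0 ≤ deriv g x) (hg' : AntitoneOn (deriv g) (Ici 0)) :
    AntitoneOn (fun x => a + b * (σ * δ * s) * (deriv g (s * x) / (δ + σ * g (s * x)) ^ 2))
      (Ici 0) := by
  have h := (antitoneOn_div_sq_saturation hσ hδ hg₀ hg hg'₀ hg').comp_MonotoneOn
    ((monotone_mul_left_of_nonneg hs).monotoneOn _) fun x hx => mul_nonneg hs hx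
  intro x hx y hy hxy
  have := h hx hy hxy
  dsimp only [Function.comp_apply] at this ⊢
  gcongr

theorem stmt5 (g : ℝ → ℝ) (hg : ContDiff ℝ 2 g)
    (hg0 : g 0 = 0) (hgp : ∀ x ≥ (0:ℝ), 0 < deriv g x)
    (hgpp : ∀ x ≥ (0:ℝ), deriv (deriv g) x < 0)
    (βd βe kd ke σ δ s γ : ℝ)
    (hβd : 0 < βd) (hβe : 0 < βe) (hkd : 0 < kd) (hke : 0 < ke)
    (hσ : 0 < σ) (hδ : 0 < δ) (hs : 0 < s) (hγ : 0 < γ)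
    (hR0 : 1 < βd * kd / γ + βe * σ * (deriv g 0) * ke * s / (γ * δ)) :
    let G : ℝ → ℝ := fun x => βd * kd * x + βe * ke * (σ * g (s * x) / (δ + σ * g (s * x)))
    let F : ℝ → ℝ := fun x => G x * (1 - x) - γ * x
    deriv F 0 = γ * ((βd * kd / γ + βe * σ * (deriv g 0) * ke * s / (γ * δ)) - 1) ∧
    0 < deriv F 0 ∧
    deriv F 1 = -G 1 - γ ∧
    deriv F 1 < 0 ∧
    ∃! c : ℝ, c ∈ Set.Ioo (0:ℝ) 1 ∧ deriv F c = 0 := by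
  intro G F
  have hdg : Differentiable ℝ g := hg.differentiable (by norm_num)
  have hmono : MonotoneOn g (Ici 0) := (strictMonoOn_of_deriv_pos (convex_Ici 0)
    hdg.continuous.continuousOn fun x hx => hgp x (interior_subset hx)).monotoneOn
  have hanti : AntitoneOn (deriv g) (Ici 0) :=
    (strictAntiOn_of_deriv_neg (convex_Ici 0) (hg.continuous_deriv (by norm_num)).continuousOn
      fun x hx => hgpp x (interior_subset hx)).antitoneOn
  have hg₀ : ∀ x ≥ 0, 0 ≤ g x := fun x hx => hg0 ▸ hmono self_mem_Ici hx hx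
  have hD : ∀ x ≥ 0, 0 < δ + σ * g (s * x) := fun x hx => by
    have := hg₀ (s * x) (by positivity); positivity
  set G' := fun x => βd * kd + βe * ke * (σ * δ * s) * (deriv g (s * x) / (δ + σ * g (s * x)) ^ 2)
  have hG : ∀ x ≥ 0, HasDerivAt G (G' x) x := fun x hx =>
    hasDerivAt_incidence _ _ (hdg _) (hD x hx).ne'
  have hG'pos : ∀ x ≥ 0, 0 < G' x := fun x hx => by
    have := hgp (s * x) (by positivity)
    have := hD x hx
    positivity
  have hG'anti : AntitoneOn G' (Ici 0) := antitoneOn_incidence_deriv _ _ (by positivity) hσ.le hδ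
    hs.le hg₀ hmono (fun x hx => (hgp x hx).le) hanti
  have hF0 : deriv F 0 = γ * ((βd * kd / γ + βe * σ * (deriv g 0) * ke * s / (γ * δ)) - 1) := by
    rw [((hG 0 le_rfl).mul_one_sub_sub γ).deriv]
    simp only [G', G, mul_zero, hg0, add_zero, sub_zero, mul_one, zero_div]
    field_simp
  have hF1 : deriv F 1 = -G 1 - γ := by
    rw [((hG 1 zero_le_one).mul_one_sub_sub γ).deriv]
    ring
  have hF0pos : 0 < deriv F 0 := hF0 ▸ mul_pos hγ (sub_pos.2 hR0)
  have hG1 : 0 < G 1 := by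
    have := hD 1 zero_le_one
    have := hg₀ (s * 1) (by positivity)
    positivity
  have hF1neg : deriv F 1 < 0 := by linarith
  exact ⟨hF0, hF0pos, hF1, hF1neg, existsUnique_deriv_mul_one_sub_sub_eq_zero
    (fun x hx => hG x hx.1) (fun x hx => hG'pos x hx.1) (hG'anti.mono Icc_subset_Ici_self)
    hF0pos hF1neg⟩
end

section
/- Let x*, y* ∈ (0,1) satisfy the endemic equilibrium equations (β_d k_d x* + β_e k_e y*)(1−x*) = γ x* and y* = σ g(s x*)/(δ + σ g(s x*)), with g smooth, g(0)=0, g'>0, g''<0 on [0,∞) and all parameters positive. Then the trace of the Jacobian J(x*,y*) = [[β_d k_d(1−x*) − (β_d k_d x* + β_e k_e y*) − γ, β_e k_e (1−x*)],[σ s g'(s x*)(1−y*), −σ g(s x*) − δ]] is negative. -/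
/-!
At the equilibrium, `x` times the first diagonal entry equals `-(βd kd x² + βe ke y)`, so that
entry is negative. The second diagonal entry is `-(δ + σ g(s x))`, and `δ + σ g(s x) > 0`
already follows from `y = σ g(s x) / (δ + σ g(s x)) ∈ (0, 1)`.
-/

lemma pos_of_div_add_mem_Ioo {δ p : ℝ} (hδ : 0 < δ) (h : p / (δ + p) ∈ Set.Ioo (0 : ℝ) 1) :
    0 < δ + p := by
  obtain ⟨hpos, hlt⟩ := h
  by_contra! hle
  rcases hle.lt_or_eq with hneg | hzero
  · rw [div_lt_one_of_neg hneg] at hlt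
    linarith
  · simp [hzero] at hpos

lemma mul_sub_of_equilibrium {a b γ x y : ℝ} (heq : (a * x + b * y) * (1 - x) = γ * x) :
    x * (a * (1 - x) - (a * x + b * y) - γ) = -(a * x ^ 2 + b * y) := by
  linear_combination heq

lemma sub_sub_neg_of_equilibrium {a b γ x y : ℝ} (ha : 0 < a) (hb : 0 < b) (hx : 0 < x)
    (hy : 0 < y) (heq : (a * x + b * y) * (1 - x) = γ * x) :
    a * (1 - x) - (a * x + b * y) - γ < 0 := by
  have hprod : x * (a * (1 - x) - (a * x + b * y) - γ) < 0 := by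
    rw [mul_sub_of_equilibrium heq]
    have : 0 < a * x ^ 2 + b * y := by positivity
    linarith
  exact neg_of_mul_neg_right hprod hx.le

theorem stmt7_general (g : ℝ → ℝ)
    (βd βe kd ke σ δ s γ : ℝ)
    (hβd : 0 < βd) (hβe : 0 < βe) (hkd : 0 < kd) (hke : 0 < ke)
    (hδ : 0 < δ)
    (x y : ℝ) (hx : x ∈ Set.Ioo (0:ℝ) 1) (hy : y ∈ Set.Ioo (0:ℝ) 1)
    (heq1 : (βd * kd * x + βe * ke * y) * (1 - x) = γ * x)
    (heq2 : y = σ * g (s * x) / (δ + σ * g (s * x))) :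
    Matrix.trace
      (!![βd * kd * (1 - x) - (βd * kd * x + βe * ke * y) - γ, βe * ke * (1 - x);
          σ * s * deriv g (s * x) * (1 - y), -(σ * g (s * x)) - δ] :
        Matrix (Fin 2) (Fin 2) ℝ) < 0 := by
  have hinfected : βd * kd * (1 - x) - (βd * kd * x + βe * ke * y) - γ < 0 :=
    sub_sub_neg_of_equilibrium (mul_pos hβd hkd) (mul_pos hβe hke) hx.1 hy.1 heq1
  have hrecovery : 0 < δ + σ * g (s * x) := pos_of_div_add_mem_Ioo hδ (heq2 ▸ hy)
  rw [Matrix.trace_fin_two_of]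
  linarith

theorem stmt7 (g : ℝ → ℝ) (hg : ContDiff ℝ 2 g)
    (hg0 : g 0 = 0) (hgp : ∀ u ≥ (0:ℝ), 0 < deriv g u)
    (hgpp : ∀ u ≥ (0:ℝ), deriv (deriv g) u < 0)
    (βd βe kd ke σ δ s γ : ℝ)
    (hβd : 0 < βd) (hβe : 0 < βe) (hkd : 0 < kd) (hke : 0 < ke)
    (hσ : 0 < σ) (hδ : 0 < δ) (hs : 0 < s) (hγ : 0 < γ)
    (x y : ℝ) (hx : x ∈ Set.Ioo (0:ℝ) 1) (hy : y ∈ Set.Ioo (0:ℝ) 1)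
    (heq1 : (βd * kd * x + βe * ke * y) * (1 - x) = γ * x)
    (heq2 : y = σ * g (s * x) / (δ + σ * g (s * x))) :
    Matrix.trace
      (!![βd * kd * (1 - x) - (βd * kd * x + βe * ke * y) - γ, βe * ke * (1 - x);
          σ * s * deriv g (s * x) * (1 - y), -(σ * g (s * x)) - δ] :
        Matrix (Fin 2) (Fin 2) ℝ) < 0 :=
  stmt7_general g βd βe kd ke σ δ s γ hβd hβe hkd hke hδ x y hx hy heq1 heq2
end

section
/- With notation as above and additionally assuming F'(x*) < 0 where F(x) = G(x)(1−x) − γx and G(x) = β_d k_d x + β_e k_e σ g(sx)/(δ + σ g(sx)), the determinant of the Jacobian J(x*,y*) at the positive equilibrium equals (σ g(s x*) + δ)·(β_d k_d x* + β_e k_e y* + γ − (1−x*)G'(x*)) and is strictly positive. -/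
/-! Differentiating the saturating term `σ g(s x) / (δ + σ g(s x))` of `G` produces the factor
`δ / (δ + σ g(s x*)) = 1 - y*`, the same factor that sits in the lower-left entry of the Jacobian.
This turns the determinant into `(σ g(s x*) + δ) · (-F'(x*))`, and both factors are positive since
`g(s x*) > g(0) = 0`. -/

open Matrix

lemma pos_of_map_zero_of_deriv_pos {g : ℝ → ℝ} (hg0 : g 0 = 0)
    (hgp : ∀ u ≥ (0 : ℝ), 0 < deriv g u) {u : ℝ} (hu : 0 < u) : 0 < g u := by
  have hdiff : ∀ v ∈ Set.Ici (0 : ℝ), DifferentiableAt ℝ g v := fun v hv =>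
    differentiableAt_of_deriv_ne_zero (hgp v hv).ne'
  have hmono : StrictMonoOn g (Set.Ici 0) :=
    strictMonoOn_of_deriv_pos (convex_Ici 0)
      (fun v hv => (hdiff v hv).continuousAt.continuousWithinAt)
      (fun v hv => hgp v (interior_subset hv))
  simpa [hg0] using hmono Set.self_mem_Ici (Set.mem_Ici.2 hu.le) hu

lemma HasDerivAt.div_const_add_self {φ : ℝ → ℝ} {φ' x : ℝ} (δ : ℝ) (hφ : HasDerivAt φ φ' x)
    (hx : δ + φ x ≠ 0) :
    HasDerivAt (fun t => φ t / (δ + φ t)) (δ * φ' / (δ + φ x) ^ 2) x :=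
  (hφ.div (hφ.const_add δ) hx).congr_deriv (by ring)

lemma HasDerivAt.mul_one_sub_sub_mul {G : ℝ → ℝ} {G' x : ℝ} (γ : ℝ) (hG : HasDerivAt G G' x) :
    HasDerivAt (fun t => G t * (1 - t) - γ * t) (G' * (1 - x) - G x - γ) x :=
  ((hG.mul ((hasDerivAt_id' x).const_sub 1)).sub (hasDerivAt_const_mul γ)).congr_deriv (by ring)

lemma det_jacobian_eq (a b γ x P δ q : ℝ) (hP : δ + P ≠ 0) :
    det !![a * (1 - x) - (a * x + b * (P / (δ + P))) - γ, b * (1 - x);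
          q * (1 - P / (δ + P)), -P - δ]
      = (P + δ) * (a * x + b * (P / (δ + P)) + γ - (1 - x) * (a + b * (δ * q / (δ + P) ^ 2))) := by
  rw [det_fin_two_of]
  field_simp
  ring

theorem stmt8_general (g : ℝ → ℝ)
    (hg0 : g 0 = 0) (hgp : ∀ u ≥ (0:ℝ), 0 < deriv g u)
    (βd βe kd ke σ δ s γ : ℝ)
    (hσ : 0 < σ) (hδ : 0 < δ) (hs : 0 < s)
    (x y : ℝ) (hx : x ∈ Set.Ioo (0:ℝ) 1)
    (hy : y = σ * g (s * x) / (δ + σ * g (s * x)))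
    (hF' : deriv (fun x => (βd * kd * x + βe * ke * (σ * g (s * x) / (δ + σ * g (s * x)))) * (1 - x)
        - γ * x) x < 0) :
    Matrix.det
      (!![βd * kd * (1 - x) - (βd * kd * x + βe * ke * y) - γ, βe * ke * (1 - x);
          σ * s * deriv g (s * x) * (1 - y), -(σ * g (s * x)) - δ] :
        Matrix (Fin 2) (Fin 2) ℝ)
      = (σ * g (s * x) + δ) *
        (βd * kd * x + βe * ke * y + γ -
          (1 - x) * deriv (fun x => βd * kd * x + βe * ke * (σ * g (s * x) / (δ + σ * g (s * x)))) x) ∧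
    0 < Matrix.det
      (!![βd * kd * (1 - x) - (βd * kd * x + βe * ke * y) - γ, βe * ke * (1 - x);
          σ * s * deriv g (s * x) * (1 - y), -(σ * g (s * x)) - δ] :
        Matrix (Fin 2) (Fin 2) ℝ) := by
  have hsx : 0 < s * x := mul_pos hs hx.1
  have hgx : 0 < g (s * x) := pos_of_map_zero_of_deriv_pos hg0 hgp hsx
  have hden : δ + σ * g (s * x) ≠ 0 := by positivity
  have hgs : HasDerivAt (fun t => g (s * t)) (deriv g (s * x) * s) x :=
    (differentiableAt_of_deriv_ne_zero (hgp _ hsx.le).ne').hasDerivAt.comp x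
      (hasDerivAt_const_mul s)
  have hG : HasDerivAt (fun t => βd * kd * t + βe * ke * (σ * g (s * t) / (δ + σ * g (s * t))))
      (βd * kd + βe * ke * (δ * (σ * s * deriv g (s * x)) / (δ + σ * g (s * x)) ^ 2)) x :=
    ((hasDerivAt_const_mul (βd * kd)).add
      (((hgs.const_mul σ).div_const_add_self δ hden).const_mul (βe * ke))).congr_deriv (by ring)
  have hdet := det_jacobian_eq (βd * kd) (βe * ke) γ x (σ * g (s * x)) δ
    (σ * s * deriv g (s * x)) hden
  rw [(hG.mul_one_sub_sub_mul γ).deriv] at hF'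
  subst hy
  rw [hG.deriv]
  exact ⟨hdet, hdet ▸ mul_pos (add_pos (mul_pos hσ hgx) hδ) (by linarith)⟩

theorem stmt8 (g : ℝ → ℝ) (hg : ContDiff ℝ 2 g)
    (hg0 : g 0 = 0) (hgp : ∀ u ≥ (0:ℝ), 0 < deriv g u)
    (hgpp : ∀ u ≥ (0:ℝ), deriv (deriv g) u < 0)
    (βd βe kd ke σ δ s γ : ℝ)
    (hβd : 0 < βd) (hβe : 0 < βe) (hkd : 0 < kd) (hke : 0 < ke)
    (hσ : 0 < σ) (hδ : 0 < δ) (hs : 0 < s) (hγ : 0 < γ)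
    (x y : ℝ) (hx : x ∈ Set.Ioo (0:ℝ) 1)
    (hy : y = σ * g (s * x) / (δ + σ * g (s * x)))
    (hFroot : (βd * kd * x + βe * ke * (σ * g (s * x) / (δ + σ * g (s * x)))) * (1 - x) - γ * x = 0)
    (hF' : deriv (fun x => (βd * kd * x + βe * ke * (σ * g (s * x) / (δ + σ * g (s * x)))) * (1 - x)
        - γ * x) x < 0) :
    Matrix.det
      (!![βd * kd * (1 - x) - (βd * kd * x + βe * ke * y) - γ, βe * ke * (1 - x);
          σ * s * deriv g (s * x) * (1 - y), -(σ * g (s * x)) - δ] :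
        Matrix (Fin 2) (Fin 2) ℝ)
      = (σ * g (s * x) + δ) *
        (βd * kd * x + βe * ke * y + γ -
          (1 - x) * deriv (fun x => βd * kd * x + βe * ke * (σ * g (s * x) / (δ + σ * g (s * x)))) x) ∧
    0 < Matrix.det
      (!![βd * kd * (1 - x) - (βd * kd * x + βe * ke * y) - γ, βe * ke * (1 - x);
          σ * s * deriv g (s * x) * (1 - y), -(σ * g (s * x)) - δ] :
        Matrix (Fin 2) (Fin 2) ℝ) :=
  stmt8_general g hg0 hgp βd βe kd ke σ δ s γ hσ hδ hs x y hx hy hF'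
end
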